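/- arXiv:1501.07207 — 6 statements merged into one kernel-verified Lean document; each statement's English description precedes it below -/
import Mathlib

section
/- Let H be a real Hilbert space and let C ⊆ H be a nonempty closed locally prox-regular set. Then for every bounded set B ⊆ H there exists a constant E_B > 0 such that for all x, y ∈ C ∩ B and every v ∈ N(C,x), one has ⟨v, y − x⟩ ≤ E_B ‖v‖ ‖y − x‖². -/
open Set Metric MeasureTheory Filter
open scoped RealInnerProductSpace NNReal Topology

noncomputable section

variable {H : Type*} [NormedAddCommGroup H] [InnerProductSpace ℝ H]

/-- The set of nearest points of `y` in `C`. -/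
def projSet (C : Set H) (y : H) : Set H :=
  {z | z ∈ C ∧ ‖y - z‖ = Metric.infDist y C}

/-- The proximal normal cone to `C` at `x`. -/
def proxNormalCone (C : Set H) (x : H) : Set H :=
  {v | ∃ ε : ℝ, 0 < ε ∧ x ∈ projSet C (x + ε • v)}

/-- `C` is `η`-prox-regular (uniformly prox-regular with constant `η`). -/
def IsProxRegular (η : ℝ) (C : Set H) : Prop :=
  ∀ t ∈ Set.Ico (0:ℝ) η, ∀ x ∈ C, ∀ v ∈ proxNormalCone C x, v ≠ 0 →
    x ∈ projSet C (x + t • ‖v‖⁻¹ • v)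

/-- `C` is locally prox-regular. -/
def IsLocallyProxRegular (C : Set H) : Prop :=
  ∀ B : Set H, Bornology.IsBounded B → ∃ η > 0, ∀ t ∈ Set.Ico (0:ℝ) η,
    ∀ x ∈ C ∩ B, ∀ v ∈ proxNormalCone C x, v ≠ 0 →
      x ∈ projSet C (x + t • ‖v‖⁻¹ • v)

theorem locally_prox_regular_hypomonotone
    [CompleteSpace H] (C : Set H) (hne : C.Nonempty) (hcl : IsClosed C)
    (hprox : IsLocallyProxRegular C) :
    ∀ B : Set H, Bornology.IsBounded B → ∃ E > 0,
      ∀ x ∈ C ∩ B, ∀ y ∈ C ∩ B, ∀ v ∈ proxNormalCone C x,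
        ⟪v, y - x⟫ ≤ E * ‖v‖ * ‖y - x‖ ^ 2 := by
  intro B hB
  obtain ⟨η, hη, hreg⟩ := hprox B hB
  refine ⟨1 / η, by positivity, ?_⟩
  rintro x ⟨hxC, hxB⟩ y ⟨hyC, hyB⟩ v hv
  by_cases hv0 : v = 0
  · simp [hv0]
  · have hvpos : 0 < ‖v‖ := norm_pos_iff.2 hv0
    set t : ℝ := η / 2 with ht
    have ht0 : 0 < t := by positivity
    have htη : t < η := by rw [ht]; linarith
    obtain ⟨-, hdist⟩ := hreg t ⟨le_of_lt ht0, htη⟩ x ⟨hxC, hxB⟩ v hv hv0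
    set u : H := ‖v‖⁻¹ • v with hu
    have hnu : ‖u‖ = 1 := by
      rw [hu, norm_smul, norm_inv, norm_norm, inv_mul_cancel₀ (ne_of_gt hvpos)]
    have hle : ‖x + t • u - x‖ ≤ ‖x + t • u - y‖ := by
      rw [hdist, ← dist_eq_norm]
      exact Metric.infDist_le_dist_of_mem hyC
    have hlhs : ‖x + t • u - x‖ = t := by
      rw [add_sub_cancel_left, norm_smul, hnu, Real.norm_eq_abs,
        abs_of_pos ht0, mul_one]
    have hrhs : x + t • u - y = (x - y) + t • u := by abel
    have hsq : t ^ 2 ≤ ‖x - y‖ ^ 2 + 2 * ⟪x - y, t • u⟫ + t ^ 2 := by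
      have h2 : t ≤ ‖(x - y) + t • u‖ := by rw [hlhs, hrhs] at hle; exact hle
      have h3 : t ^ 2 ≤ ‖(x - y) + t • u‖ ^ 2 := by
        exact pow_le_pow_left₀ (le_of_lt ht0) h2 2
      have h4 : ‖(x - y) + t • u‖ ^ 2 = ‖x - y‖ ^ 2 + 2 * ⟪x - y, t • u⟫ + ‖t • u‖ ^ 2 :=
        norm_add_sq_real _ _
      have h5 : ‖t • u‖ = t := by
        rw [norm_smul, hnu, Real.norm_eq_abs, abs_of_pos ht0, mul_one]
      rw [h4, h5] at h3
      exact h3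
    have hkey : 0 ≤ ‖x - y‖ ^ 2 + 2 * ⟪x - y, t • u⟫ := by linarith
    have hinner : ⟪x - y, t • u⟫ = t * ‖v‖⁻¹ * (- ⟪v, y - x⟫) := by
      rw [hu, real_inner_smul_right, real_inner_smul_right, real_inner_comm]
      have : x - y = -(y - x) := by abel
      rw [this, inner_neg_right]
      ring
    rw [hinner] at hkey
    have hnorm : ‖x - y‖ = ‖y - x‖ := norm_sub_rev _ _
    rw [hnorm] at hkey
    have h6 : η * (‖v‖⁻¹ * ⟪v, y - x⟫) ≤ ‖y - x‖ ^ 2 := by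
      have h2t : 2 * t = η := by rw [ht]; ring
      nlinarith [hkey]
    have hw : ‖v‖⁻¹ * ⟪v, y - x⟫ ≤ ‖y - x‖ ^ 2 / η :=
      (le_div_iff₀' hη).2 h6
    have hI : ⟪v, y - x⟫ = ‖v‖ * (‖v‖⁻¹ * ⟪v, y - x⟫) := by
      rw [← mul_assoc, mul_inv_cancel₀ (ne_of_gt hvpos), one_mul]
    rw [hI]
    calc ‖v‖ * (‖v‖⁻¹ * ⟪v, y - x⟫) ≤ ‖v‖ * (‖y - x‖ ^ 2 / η) :=
          mul_le_mul_of_nonneg_left hw (le_of_lt hvpos)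
      _ = 1 / η * ‖v‖ * ‖y - x‖ ^ 2 := by ring
end
end

section
/- Let H be a real Hilbert space and let C ⊆ H be a nonempty closed set. Assume that for every bounded set B ⊆ H there exists a constant κ_B > 0 such that ⟨v, y − x⟩ ≤ κ_B ‖v‖ ‖y − x‖² for all x, y ∈ C ∩ B and all v ∈ N(C,x). Then C is locally prox-regular; more precisely, for every bounded set B ⊆ H there exists θ_B > 0 such that for every t ∈ [0, θ_B), every x ∈ C ∩ B and every v ∈ N(C,x) with ‖v‖ = 1, one has d_C(x + t v) = t, and in particular x ∈ P_C(x + t v). -/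
/-!
Fix a bounded set `B ⊆ closedBall 0 R`, let `κ` be the hypomonotonicity constant on
`closedBall 0 (R + 2)`, and take a unit proximal normal `v` at `x ∈ C ∩ B` and
`0 ≤ t < min 1 (1 / (2κ))`. For `y ∈ C` near `x` the expansion
`‖x + t v - y‖² = t² - 2t⟪v, y - x⟫ + ‖y - x‖² ≥ t² + (1 - 2κt)‖y - x‖²` gives
`‖x + t v - y‖ ≥ t`, and for `y` far from `x` this is the triangle inequality. Hence
`d_C(x + t v) = t = ‖(x + t v) - x‖`, so `x` is a nearest point.
-/

open Set Metric MeasureTheory Filter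
open scoped RealInnerProductSpace NNReal Topology

noncomputable section

variable {H : Type*} [NormedAddCommGroup H] [InnerProductSpace ℝ H]

def IsLocallyHypomonotone (C : Set H) : Prop :=
  ∀ B : Set H, Bornology.IsBounded B → ∃ κ > 0,
    ∀ x ∈ C ∩ B, ∀ y ∈ C ∩ B, ∀ v ∈ proxNormalCone C x,
      ⟪v, y - x⟫ ≤ κ * ‖v‖ * ‖y - x‖ ^ 2

lemma smul_mem_proxNormalCone {C : Set H} {x v : H} (hv : v ∈ proxNormalCone C x)
    {c : ℝ} (hc : 0 < c) : c • v ∈ proxNormalCone C x := by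
  obtain ⟨ε, hε, hx⟩ := hv
  refine ⟨ε / c, div_pos hε hc, ?_⟩
  rwa [smul_smul, div_mul_cancel₀ _ hc.ne']

lemma isLocallyProxRegular_of_forall_norm_eq_one {C : Set H}
    (h : ∀ B : Set H, Bornology.IsBounded B → ∃ η > 0, ∀ t ∈ Ico (0:ℝ) η,
      ∀ x ∈ C ∩ B, ∀ v ∈ proxNormalCone C x, ‖v‖ = 1 → x ∈ projSet C (x + t • v)) :
    IsLocallyProxRegular C := by
  intro B hB
  obtain ⟨η, hη, hproj⟩ := h B hB
  refine ⟨η, hη, fun t ht x hx v hv hv0 => hproj t ht x hx _ ?_ ?_⟩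
  · exact smul_mem_proxNormalCone hv (inv_pos.mpr (norm_pos_iff.mpr hv0))
  · rw [norm_smul, norm_inv, norm_norm, inv_mul_cancel₀ (norm_ne_zero_iff.mpr hv0)]

lemma le_norm_add_smul_sub_of_inner_le {x y v : H} {κ t : ℝ} (hv : ‖v‖ = 1) (ht : 0 ≤ t)
    (hκt : 2 * κ * t ≤ 1) (hinner : ⟪v, y - x⟫ ≤ κ * ‖y - x‖ ^ 2) :
    t ≤ ‖x + t • v - y‖ := by
  have hsq : t ^ 2 ≤ ‖x + t • v - y‖ ^ 2 :=
    calc t ^ 2 ≤ t ^ 2 + (1 - 2 * κ * t) * ‖y - x‖ ^ 2 := by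
          nlinarith [sq_nonneg ‖y - x‖]
      _ ≤ t ^ 2 - 2 * (t * ⟪v, y - x⟫) + ‖y - x‖ ^ 2 := by nlinarith
      _ = ‖t • v - (y - x)‖ ^ 2 := by
          rw [norm_sub_sq_real (t • v), real_inner_smul_left, norm_smul_of_nonneg ht, hv,
            mul_one]
      _ = ‖x + t • v - y‖ ^ 2 := by congr 2; abel
  exact le_of_sq_le_sq hsq (norm_nonneg _)

lemma le_norm_add_smul_sub_of_le_norm_sub {x y v : H} {t : ℝ} (hv : ‖v‖ = 1) (ht : 0 ≤ t)
    (hfar : 2 * t ≤ ‖y - x‖) : t ≤ ‖x + t • v - y‖ :=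
  calc t ≤ ‖y - x‖ - ‖t • v‖ := by
        rw [norm_smul_of_nonneg ht, hv]; linarith
    _ ≤ ‖(y - x) - t • v‖ := norm_sub_norm_le _ _
    _ = ‖x + t • v - y‖ := by rw [← norm_neg]; congr 1; abel

lemma infDist_add_smul_eq {C : Set H} {x v : H} {κ r t : ℝ} (hx : x ∈ C) (hv : ‖v‖ = 1)
    (ht : 0 ≤ t) (hκt : 2 * κ * t ≤ 1) (htr : 2 * t ≤ r)
    (hloc : ∀ y ∈ C, ‖y - x‖ ≤ r → ⟪v, y - x⟫ ≤ κ * ‖y - x‖ ^ 2) :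
    infDist (x + t • v) C = t := by
  refine le_antisymm ?_ ((le_infDist ⟨x, hx⟩).mpr fun y hy => ?_)
  · calc infDist (x + t • v) C ≤ dist (x + t • v) x := infDist_le_dist_of_mem hx
      _ = t := by rw [dist_eq_norm, add_sub_cancel_left, norm_smul_of_nonneg ht, hv, mul_one]
  · rw [dist_eq_norm]
    rcases le_or_gt ‖y - x‖ r with hnear | hfar
    · exact le_norm_add_smul_sub_of_inner_le hv ht hκt (hloc y hy hnear)
    · exact le_norm_add_smul_sub_of_le_norm_sub hv ht (by linarith)

theorem IsLocallyHypomonotone.exists_infDist_add_smul_eq {C : Set H}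
    (hC : IsLocallyHypomonotone C) {B : Set H} (hB : Bornology.IsBounded B) :
    ∃ θ > 0, ∀ t ∈ Ico (0:ℝ) θ, ∀ x ∈ C ∩ B, ∀ v ∈ proxNormalCone C x, ‖v‖ = 1 →
      infDist (x + t • v) C = t ∧ x ∈ projSet C (x + t • v) := by
  obtain ⟨R, hR⟩ := hB.subset_closedBall 0
  obtain ⟨κ, hκ, hhyp⟩ := hC (closedBall 0 (R + 2)) isBounded_closedBall
  refine ⟨min 1 (1 / (2 * κ)), lt_min one_pos (by positivity), ?_⟩
  rintro t ⟨ht0, htθ⟩ x ⟨hxC, hxB⟩ v hv hv1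
  have ht1 : t < 1 := htθ.trans_le (min_le_left _ _)
  have hκt : 2 * κ * t ≤ 1 := by
    have := htθ.trans_le (min_le_right _ _)
    rw [lt_div_iff₀ (by positivity)] at this
    linarith
  have hxR : ‖x‖ ≤ R := mem_closedBall_zero_iff.mp (hR hxB)
  have hloc : ∀ y ∈ C, ‖y - x‖ ≤ 2 → ⟪v, y - x⟫ ≤ κ * ‖y - x‖ ^ 2 := by
    intro y hy hnear
    have hyR : ‖y‖ ≤ R + 2 := by
      calc ‖y‖ ≤ ‖y - x‖ + ‖x‖ := norm_le_norm_sub_add y x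
        _ ≤ R + 2 := by linarith
    simpa [hv1] using hhyp x ⟨hxC, mem_closedBall_zero_iff.mpr (by linarith)⟩
      y ⟨hy, mem_closedBall_zero_iff.mpr hyR⟩ v hv
  have hdist := infDist_add_smul_eq hxC hv1 ht0 hκt (by linarith) hloc
  refine ⟨hdist, hxC, ?_⟩
  rw [hdist, add_sub_cancel_left, norm_smul_of_nonneg ht0, hv1, mul_one]

theorem hypomonotone_implies_locally_prox_regular_general
    (C : Set H)
    (hyp : ∀ B : Set H, Bornology.IsBounded B → ∃ κ > 0,
      ∀ x ∈ C ∩ B, ∀ y ∈ C ∩ B, ∀ v ∈ proxNormalCone C x,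
        ⟪v, y - x⟫ ≤ κ * ‖v‖ * ‖y - x‖ ^ 2) :
    IsLocallyProxRegular C ∧
      ∀ B : Set H, Bornology.IsBounded B → ∃ θ > 0, ∀ t ∈ Set.Ico (0:ℝ) θ,
        ∀ x ∈ C ∩ B, ∀ v ∈ proxNormalCone C x, ‖v‖ = 1 →
          Metric.infDist (x + t • v) C = t ∧ x ∈ projSet C (x + t • v) := by
  have key := fun B (hB : Bornology.IsBounded B) =>
    IsLocallyHypomonotone.exists_infDist_add_smul_eq hyp hB
  refine ⟨isLocallyProxRegular_of_forall_norm_eq_one fun B hB => ?_, key⟩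
  obtain ⟨θ, hθ, h⟩ := key B hB
  exact ⟨θ, hθ, fun t ht x hx v hv hv1 => (h t ht x hx v hv hv1).2⟩

theorem hypomonotone_implies_locally_prox_regular
    [CompleteSpace H] (C : Set H) (hne : C.Nonempty) (hcl : IsClosed C)
    (hyp : ∀ B : Set H, Bornology.IsBounded B → ∃ κ > 0,
      ∀ x ∈ C ∩ B, ∀ y ∈ C ∩ B, ∀ v ∈ proxNormalCone C x,
        ⟪v, y - x⟫ ≤ κ * ‖v‖ * ‖y - x‖ ^ 2) :
    IsLocallyProxRegular C ∧
      ∀ B : Set H, Bornology.IsBounded B → ∃ θ > 0, ∀ t ∈ Set.Ico (0:ℝ) θ,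
        ∀ x ∈ C ∩ B, ∀ v ∈ proxNormalCone C x, ‖v‖ = 1 →
          Metric.infDist (x + t • v) C = t ∧ x ∈ projSet C (x + t • v) :=
  hypomonotone_implies_locally_prox_regular_general C hyp
end
end

section
/- Hypomonotonicity characterization of local prox-regularity: let H be a real Hilbert space and C ⊆ H a nonempty closed set. Then C is locally prox-regular if and only if for every bounded set B ⊆ H there exists a constant E_B > 0 such that for all x, y ∈ C ∩ B and every v ∈ N(C,x), one has ⟨v, y − x⟩ ≤ E_B ‖v‖ ‖y − x‖². -/
open Set Metric MeasureTheory Filter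
open scoped RealInnerProductSpace NNReal Topology

noncomputable section

variable {H : Type*} [NormedAddCommGroup H] [InnerProductSpace ℝ H]

theorem locally_prox_regular_iff_hypomonotone
    [CompleteSpace H] (C : Set H) (hne : C.Nonempty) (hcl : IsClosed C) :
    IsLocallyProxRegular C ↔
      ∀ B : Set H, Bornology.IsBounded B → ∃ E > 0,
        ∀ x ∈ C ∩ B, ∀ y ∈ C ∩ B, ∀ v ∈ proxNormalCone C x,
          ⟪v, y - x⟫ ≤ E * ‖v‖ * ‖y - x‖ ^ 2 := by
  constructor
  · intro hlpr B hB
    obtain ⟨η, hη, hprox⟩ := hlpr B hB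
    refine ⟨1/η, by positivity, ?_⟩
    rintro x ⟨hxC, hxB⟩ y ⟨hyC, hyB⟩ v hv
    rcases eq_or_ne v 0 with rfl | hv0
    · simp
    set t := η / 2 with ht
    have htpos : 0 < t := by positivity
    have hmem := hprox t ⟨le_of_lt htpos, by simpa [ht] using half_lt_self hη⟩ x ⟨hxC, hxB⟩
      v hv hv0
    set u := ‖v‖⁻¹ • v with hu
    have hvn : (0:ℝ) < ‖v‖ := norm_pos_iff.mpr hv0
    have hun : ‖u‖ = 1 := by
      rw [hu, norm_smul, norm_inv, norm_norm]
      field_simp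
    have htu : ‖t • u‖ = t := by
      rw [norm_smul, hun, Real.norm_eq_abs, abs_of_pos htpos, mul_one]
    have hdist : Metric.infDist (x + t • u) C = t := by
      have h2 := hmem.2
      rw [add_sub_cancel_left, htu] at h2
      exact h2.symm
    have hle : t ≤ ‖(x + t • u) - y‖ := by
      have := Metric.infDist_le_dist_of_mem (x := x + t • u) hyC
      rw [hdist, dist_eq_norm] at this
      linarith
    have hsq : t ^ 2 ≤ ‖(x - y) + t • u‖ ^ 2 := by
      have h0 : 0 ≤ ‖(x + t • u) - y‖ := norm_nonneg _
      have he : (x + t • u) - y = (x - y) + t • u := by abel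
      rw [← he]
      nlinarith
    rw [norm_add_sq_real, htu] at hsq
    have hinner : ⟪x - y, t • u⟫ = t * ‖v‖⁻¹ * ⟪x - y, v⟫ := by
      rw [hu, real_inner_smul_right, real_inner_smul_right]; ring
    rw [hinner] at hsq
    have hxy : ⟪x - y, v⟫ = -⟪v, y - x⟫ := by
      rw [real_inner_comm, show x - y = -(y - x) from by abel, inner_neg_right]
    rw [hxy] at hsq
    -- t^2 ≤ ‖x-y‖^2 + 2*(t*‖v‖⁻¹*(-⟪v,y-x⟫)) + t^2
    have hnorm : ‖x - y‖ = ‖y - x‖ := norm_sub_rev _ _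
    rw [hnorm] at hsq
    have hinvmul : ‖v‖ * ‖v‖⁻¹ = 1 := mul_inv_cancel₀ (ne_of_gt hvn)
    have h1 : 2 * t * (‖v‖⁻¹ * ⟪v, y - x⟫) ≤ ‖y - x‖ ^ 2 := by nlinarith
    have h2 : 2 * t * ⟪v, y - x⟫ ≤ ‖v‖ * ‖y - x‖ ^ 2 := by
      have h'' : ‖v‖ * (2 * t * (‖v‖⁻¹ * ⟪v, y - x⟫)) = 2 * t * ⟪v, y - x⟫ := by
        rw [show ‖v‖ * (2 * t * (‖v‖⁻¹ * ⟪v, y - x⟫))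
            = ‖v‖ * ‖v‖⁻¹ * (2 * t * ⟪v, y - x⟫) from by ring, hinvmul, one_mul]
      linarith [mul_le_mul_of_nonneg_left h1 (le_of_lt hvn)]
    have heq : (1:ℝ)/η * ‖v‖ * ‖y - x‖ ^ 2 = ‖v‖ * ‖y - x‖ ^ 2 / (2 * t) := by
      rw [ht]; field_simp
    rw [heq, le_div_iff₀ (by positivity)]
    linarith
  · intro hyp B hB
    obtain ⟨E, hE, hineq⟩ := hyp (Metric.cthickening 2 B) hB.cthickening
    refine ⟨min (1/(2*E)) 1, lt_min (by positivity) one_pos, ?_⟩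
    rintro t ⟨ht0, htlt⟩ x ⟨hxC, hxB⟩ v hv hv0
    set u := ‖v‖⁻¹ • v with hu
    have hvn : (0:ℝ) < ‖v‖ := norm_pos_iff.mpr hv0
    have hun : ‖u‖ = 1 := by
      rw [hu, norm_smul, norm_inv, norm_norm]
      field_simp
    have htu : ‖t • u‖ = t := by
      rw [norm_smul, hun, Real.norm_eq_abs, abs_of_nonneg ht0, mul_one]
    have htE : t < 1/(2*E) := lt_of_lt_of_le htlt (min_le_left _ _)
    have ht1 : t < 1 := lt_of_lt_of_le htlt (min_le_right _ _)
    have key : ∀ y ∈ C, t ≤ ‖(x + t • u) - y‖ := by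
      intro y hyC
      rcases le_or_gt (2*t) ‖y - x‖ with h | h
      · have h1 : ‖y - x‖ ≤ ‖x + t • u - y‖ + t := by
          have he : y - x = (y - (x + t • u)) + t • u := by abel
          calc ‖y - x‖ = ‖(y - (x + t • u)) + t • u‖ := by rw [← he]
            _ ≤ ‖y - (x + t • u)‖ + ‖t • u‖ := norm_add_le _ _
            _ = ‖x + t • u - y‖ + t := by rw [norm_sub_rev, htu]
        linarith
      · have hyB : y ∈ Metric.cthickening 2 B := by
          apply Metric.mem_cthickening_of_dist_le y x 2 B hxB
          rw [dist_eq_norm]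
          linarith
        have hx' : x ∈ Metric.cthickening 2 B :=
          Metric.self_subset_cthickening B hxB
        have h2 := hineq x ⟨hxC, hx'⟩ y ⟨hyC, hyB⟩ v hv
        have h3 : ⟪u, y - x⟫ ≤ E * ‖y - x‖ ^ 2 := by
          rw [hu, real_inner_smul_left]
          rw [inv_mul_le_iff₀ hvn]
          calc ⟪v, y - x⟫ ≤ E * ‖v‖ * ‖y - x‖ ^ 2 := h2
            _ = ‖v‖ * (E * ‖y - x‖ ^ 2) := by ring
        have hexp : ‖(x + t • u) - y‖ ^ 2 = ‖x - y‖ ^ 2 + 2 * ⟪x - y, t • u⟫ + t ^ 2 := by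
          have he : (x + t • u) - y = (x - y) + t • u := by abel
          rw [he, norm_add_sq_real, htu]
        have hin : ⟪x - y, t • u⟫ = t * (-⟪u, y - x⟫) := by
          rw [real_inner_smul_right, real_inner_comm]
          congr 1
          rw [show x - y = -(y - x) from by abel, inner_neg_right]
        have hnorm : ‖x - y‖ = ‖y - x‖ := norm_sub_rev _ _
        have hsq : t ^ 2 ≤ ‖(x + t • u) - y‖ ^ 2 := by
          rw [hexp, hin, hnorm]
          have h2tE : 2 * t * E ≤ 1 := by
            have h' : t * (2 * E) < 1 := (lt_div_iff₀ (by positivity)).mp htE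
            calc 2 * t * E = t * (2 * E) := by ring
              _ ≤ 1 := le_of_lt h'
          nlinarith [sq_nonneg ‖y - x‖, norm_nonneg (y - x)]
        nlinarith [norm_nonneg ((x + t • u) - y)]
    refine ⟨hxC, ?_⟩
    rw [add_sub_cancel_left, htu]
    apply le_antisymm
    · rw [← not_lt, Metric.infDist_lt_iff hne]
      rintro ⟨y, hyC, hdy⟩
      rw [dist_eq_norm] at hdy
      exact absurd (key y hyC) (not_le.mpr hdy)
    · have := Metric.infDist_le_dist_of_mem (x := x + t • u) hxC
      rwa [dist_eq_norm, add_sub_cancel_left, htu] at this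
end
end

section
/- Closedness of the proximal normal cone for locally prox-regular sets: let H be a real Hilbert space and C ⊆ H a nonempty closed locally prox-regular set. Let x ∈ C, let (x_i) be a sequence in C converging to x, let v_i ∈ N(C, x_i) for each i, and suppose v_i converges to some v ∈ H. Then v ∈ N(C, x). In particular, the limiting normal cone of C at x (the set of all such limits) coincides with the proximal normal cone N(C,x). -/
open Set Metric MeasureTheory Filter
open scoped RealInnerProductSpace NNReal Topology

noncomputable section

variable {H : Type*} [NormedAddCommGroup H] [InnerProductSpace ℝ H]

theorem zero_mem_proxNormalCone (C : Set H) {x : H} (hx : x ∈ C) :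
    (0 : H) ∈ proxNormalCone C x := by
  refine ⟨1, one_pos, hx, ?_⟩
  simp [Metric.infDist_zero_of_mem hx]

theorem aux_limit (C : Set H) (hprox : IsLocallyProxRegular C)
    (x : H) (hx : x ∈ C)
    (xs : ℕ → H) (hxs : ∀ i, xs i ∈ C) (hxsx : Tendsto xs atTop (𝓝 x))
    (vs : ℕ → H) (hvs : ∀ i, vs i ∈ proxNormalCone C (xs i))
    (v : H) (hvsv : Tendsto vs atTop (𝓝 v)) : v ∈ proxNormalCone C x := by
  by_cases hv : v = 0
  · subst hv; exact zero_mem_proxNormalCone C hx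
  obtain ⟨η, hη, hB⟩ := hprox (Metric.closedBall x 1) Metric.isBounded_closedBall
  set t : ℝ := η / 2 with htdef
  have ht : 0 < t := by positivity
  have ht' : t < η := by linarith [half_lt_self hη]
  have hball : ∀ᶠ i in atTop, xs i ∈ Metric.closedBall x 1 :=
    hxsx (Metric.closedBall_mem_nhds x one_pos)
  have hne0 : ∀ᶠ i in atTop, vs i ≠ 0 := hvsv.eventually_ne hv
  set y : ℕ → H := fun i => xs i + t • ‖vs i‖⁻¹ • vs i with hydef
  set Y : H := x + t • ‖v‖⁻¹ • v with hYdef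
  have hyY : Tendsto y atTop (𝓝 Y) := by
    refine hxsx.add (tendsto_const_nhds.smul ?_)
    exact (hvsv.norm.inv₀ (norm_ne_zero_iff.mpr hv)).smul hvsv
  have hP : ∀ᶠ i in atTop, xs i ∈ projSet C (y i) := by
    filter_upwards [hball, hne0] with i hb hn
    exact hB t ⟨le_of_lt ht, ht'⟩ (xs i) ⟨hxs i, hb⟩ (vs i) (hvs i) hn
  have hdist : ∀ᶠ i in atTop, Metric.infDist (y i) C = t := by
    filter_upwards [hP, hne0] with i hp hn
    have : ‖y i - xs i‖ = t := by
      have : y i - xs i = t • ‖vs i‖⁻¹ • vs i := by simp [hydef]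
      rw [this, norm_smul, norm_smul, norm_inv, norm_norm,
        inv_mul_cancel₀ (norm_ne_zero_iff.mpr hn)]
      simp [abs_of_pos ht]
    rw [← hp.2, this]
  have h1 : Tendsto (fun i => Metric.infDist (y i) C) atTop (𝓝 (Metric.infDist Y C)) :=
    ((continuous_infDist_pt C).continuousAt).tendsto.comp hyY
  have hYt : Metric.infDist Y C = t :=
    tendsto_nhds_unique h1 (tendsto_const_nhds.congr' (hdist.mono fun i h => h.symm))
  have hnormY : ‖Y - x‖ = t := by
    have : Y - x = t • ‖v‖⁻¹ • v := by simp [hYdef]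
    rw [this, norm_smul, norm_smul, norm_inv, norm_norm,
      inv_mul_cancel₀ (norm_ne_zero_iff.mpr hv)]
    simp [abs_of_pos ht]
  refine ⟨t * ‖v‖⁻¹, mul_pos ht (inv_pos.mpr (norm_pos_iff.mpr hv)), hx, ?_⟩
  have : x + (t * ‖v‖⁻¹) • v = Y := by rw [hYdef, smul_smul]
  rw [this, hnormY, hYt]

theorem proxNormalCone_closed_of_locally_prox_regular
    [CompleteSpace H] (C : Set H) (hne : C.Nonempty) (hcl : IsClosed C)
    (hprox : IsLocallyProxRegular C)
    (x : H) (hx : x ∈ C)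
    (xs : ℕ → H) (hxs : ∀ i, xs i ∈ C) (hxsx : Tendsto xs atTop (𝓝 x))
    (vs : ℕ → H) (hvs : ∀ i, vs i ∈ proxNormalCone C (xs i))
    (v : H) (hvsv : Tendsto vs atTop (𝓝 v)) :
    v ∈ proxNormalCone C x ∧
      {w : H | ∃ (ys : ℕ → H) (ws : ℕ → H), (∀ i, ys i ∈ C) ∧
        (∀ i, ws i ∈ proxNormalCone C (ys i)) ∧
        Tendsto ys atTop (𝓝 x) ∧ Tendsto ws atTop (𝓝 w)} = proxNormalCone C x := by

  have main : ∀ (yy : H) (ys ws : ℕ → H), (∀ i, ys i ∈ C) →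
      (∀ i, ws i ∈ proxNormalCone C (ys i)) →
      Tendsto ys atTop (𝓝 x) → Tendsto ws atTop (𝓝 yy) → yy ∈ proxNormalCone C x :=
    fun yy ys ws h1 h2 h3 h4 => aux_limit C hprox x hx ys h1 h3 ws h2 yy h4
  refine ⟨main v xs vs hxs hvs hxsx hvsv, ?_⟩
  ext w
  constructor
  · rintro ⟨ys, ws, h1, h2, h3, h4⟩
    exact main w ys ws h1 h2 h3 h4
  · intro hw
    exact ⟨fun _ => x, fun _ => w, fun _ => hx, fun _ => hw,
      tendsto_const_nhds, tendsto_const_nhds⟩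
end
end

section
/- Single-valuedness of the metric projection near a locally prox-regular set: let H be a real Hilbert space and C ⊆ H a nonempty closed locally prox-regular set. Then for every bounded set B ⊆ H with B ∩ C ≠ ∅ there exists ℓ_B > 0 such that for every x ∈ B with d_C(x) < ℓ_B, the projection set is a nonempty singleton: there exists a unique x* ∈ C with ‖x − x*‖ = d_C(x), i.e. P_C(x) = {x*}. -/
open Set Metric MeasureTheory Filter
open scoped RealInnerProductSpace NNReal Topology

noncomputable section

variable {H : Type*} [NormedAddCommGroup H] [InnerProductSpace ℝ H]

lemma le_infDist' {s : Set H} (hs : s.Nonempty) {x : H} {r : ℝ}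
    (h : ∀ c ∈ s, r ≤ dist x c) : r ≤ infDist x s := by
  by_contra hlt
  obtain ⟨c, hc, hd⟩ := (infDist_lt_iff hs).mp (not_le.mp hlt)
  exact absurd (h c hc) (not_le.mpr hd)

lemma quad_id (a m : ℝ) (ha : 0 < a) (hm : 0 < m) (w p x : H) :
    a * ‖x - w‖ ^ 2 + m * ‖x - p‖ ^ 2
      = (a + m) * ‖x - (a + m)⁻¹ • (a • w + m • p)‖ ^ 2 + (a * m / (a + m)) * ‖w - p‖ ^ 2 := by
  have hs : (0:ℝ) < a + m := by linarith
  have e1 : ‖x - w‖ ^ 2 = ‖x‖ ^ 2 - 2 * ⟪x, w⟫ + ‖w‖ ^ 2 := norm_sub_sq_real x w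
  have e2 : ‖x - p‖ ^ 2 = ‖x‖ ^ 2 - 2 * ⟪x, p⟫ + ‖p‖ ^ 2 := norm_sub_sq_real x p
  have e3 : ‖w - p‖ ^ 2 = ‖w‖ ^ 2 - 2 * ⟪w, p⟫ + ‖p‖ ^ 2 := norm_sub_sq_real w p
  have e4 : ‖x - (a + m)⁻¹ • (a • w + m • p)‖ ^ 2
      = ‖x‖ ^ 2 - 2 * ⟪x, (a + m)⁻¹ • (a • w + m • p)⟫ + ‖(a + m)⁻¹ • (a • w + m • p)‖ ^ 2 :=
    norm_sub_sq_real _ _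
  have e5 : ⟪x, (a + m)⁻¹ • (a • w + m • p)⟫ = (a + m)⁻¹ * (a * ⟪x, w⟫ + m * ⟪x, p⟫) := by
    rw [real_inner_smul_right, inner_add_right, real_inner_smul_right, real_inner_smul_right]
  have e6a : ‖(a + m)⁻¹ • (a • w + m • p)‖ ^ 2 = ((a + m)⁻¹) ^ 2 * ‖a • w + m • p‖ ^ 2 := by
    rw [norm_smul]
    simp [mul_pow, sq_abs, Real.norm_eq_abs]
  have e6b : ‖a • w + m • p‖ ^ 2 = a ^ 2 * ‖w‖ ^ 2 + 2 * (a * m * ⟪w, p⟫) + m ^ 2 * ‖p‖ ^ 2 := by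
    rw [norm_add_sq_real, real_inner_smul_left, real_inner_smul_right, norm_smul, norm_smul]
    simp [mul_pow, sq_abs, Real.norm_eq_abs]
    ring
  rw [e1, e2, e3, e4, e5, e6a, e6b]
  field_simp
  ring

set_option maxHeartbeats 1000000 in
lemma exists_proj_near {C : Set H} [CompleteSpace H] (hne : C.Nonempty) (hcl : IsClosed C)
    (y : H) {ε : ℝ} (hε : 0 < ε) :
    ∃ w z : H, ‖w - y‖ ≤ ε ∧ z ∈ projSet C w := by
  set M : ℝ := infDist y C + 2 with hM
  have hd0 : 0 ≤ infDist y C := infDist_nonneg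
  have hM2 : 2 ≤ M := by simp [hM]; linarith
  set κ : ℝ := min (1 / (2 * (M + 1))) (ε / (2 * (M + 1))) with hκdef
  have hκpos : 0 < κ := lt_min (by positivity) (by positivity)
  have hκ1 : κ ≤ 1 := by
    have := min_le_left (1 / (2 * (M + 1))) (ε / (2 * (M + 1)))
    have h1 : 1 / (2 * (M + 1)) ≤ 1 := by
      rw [div_le_one (by linarith)]; linarith
    linarith
  have hpos2M : (0:ℝ) < 2 * (M + 1) := by linarith
  have hκa : 2 * κ * (M + 1) ≤ 1 := by
    have h : κ ≤ 1 / (2 * (M + 1)) := by rw [hκdef]; exact min_le_left _ _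
    have h2 := (le_div_iff₀ hpos2M).mp h
    calc 2 * κ * (M + 1) = κ * (2 * (M + 1)) := by ring
      _ ≤ 1 := h2
  have hκε : 2 * κ * (M + 1) ≤ ε := by
    have h : κ ≤ ε / (2 * (M + 1)) := by rw [hκdef]; exact min_le_right _ _
    have h2 := (le_div_iff₀ hpos2M).mp h
    calc 2 * κ * (M + 1) = κ * (2 * (M + 1)) := by ring
      _ ≤ ε := h2
  obtain ⟨μ, e, hμdef, hedef⟩ :
      ∃ μ e : ℕ → ℝ, (∀ n, μ n = κ * (1/2) ^ n) ∧ (∀ n, e n = κ ^ 3 * (1/4) ^ n) :=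
    ⟨_, _, fun _ => rfl, fun _ => rfl⟩
  have hμpos : ∀ n, 0 < μ n := fun n => by rw [hμdef]; positivity
  have hepos : ∀ n, 0 < e n := fun n => by rw [hedef]; positivity
  have he1 : ∀ n, e n ≤ 1 := by
    intro n
    have h4 : ((1:ℝ)/4) ^ n ≤ 1 := pow_le_one₀ (by norm_num) (by norm_num)
    have : κ ^ 3 ≤ 1 := pow_le_one₀ hκpos.le hκ1
    simp only [hedef]
    exact mul_le_one₀ this (by positivity) h4
  obtain ⟨A, hAdef⟩ : ∃ A : ℕ → ℝ, ∀ n, A n = 1 + ∑ k ∈ Finset.range n, μ k :=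
    ⟨_, fun _ => rfl⟩
  have hA1 : ∀ n, 1 ≤ A n := by
    intro n
    have : 0 ≤ ∑ k ∈ Finset.range n, μ k :=
      Finset.sum_nonneg fun k _ => (hμpos k).le
    simp only [hAdef]; linarith
  have hApos : ∀ n, 0 < A n := fun n => lt_of_lt_of_le one_pos (hA1 n)
  have hAs : ∀ n, A (n+1) = A n + μ n := by
    intro n; simp only [hAdef, Finset.sum_range_succ]; ring
  have hA2 : ∀ n, A n ≤ 1 + 2 * κ := by
    intro n
    have : ∑ k ∈ Finset.range n, μ k = κ * ∑ k ∈ Finset.range n, ((1:ℝ)/2) ^ k := by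
      simp only [hμdef, Finset.mul_sum]
    have h2 := sum_geometric_two_le n
    simp only [hAdef, this]
    nlinarith [hκpos]
  have hA3 : ∀ n, A n ≤ 3 := by
    intro n; have := hA2 n; nlinarith [hκpos, hκ1]
  have hpick : ∀ (n : ℕ) (p : H), ∃ c, c ∈ C ∧ dist p c < infDist p C + e n := by
    intro n p
    obtain ⟨c, hc, hd⟩ := (infDist_lt_iff hne).mp
      (show infDist p C < infDist p C + e n by linarith [hepos n])
    exact ⟨c, hc, hd⟩
  obtain ⟨w, c, hw0, hwrec, hcC, hcd⟩ :
      ∃ (w c : ℕ → H), w 0 = y ∧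
        (∀ n, w (n+1) = (A (n+1))⁻¹ • (A n • w n + μ n • c n)) ∧
        (∀ n, c n ∈ C) ∧ (∀ n, dist (w n) (c n) < infDist (w n) C + e n) := by
    classical
    let pk : ℕ → H → H := fun n p => (hpick n p).choose
    let w : ℕ → H := fun n => Nat.rec y (fun n wn => (A (n+1))⁻¹ • (A n • wn + μ n • pk n wn)) n
    exact ⟨w, fun n => pk n (w n), rfl, fun n => rfl,
      fun n => (hpick n (w n)).choose_spec.1, fun n => (hpick n (w n)).choose_spec.2⟩
  have hwdiff : ∀ n, w (n+1) - w n = (A (n+1))⁻¹ • (μ n • (c n - w n)) := by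
    intro n
    have h0 : A (n+1) ≠ 0 := (hApos (n+1)).ne'
    rw [hwrec n]
    have h1 : (A (n+1))⁻¹ • (A n • w n + μ n • c n) - w n
        = (A (n+1))⁻¹ • ((A n • w n + μ n • c n) - A (n+1) • w n) := by
      rw [smul_sub, inv_smul_smul₀ h0]
    rw [h1]
    congr 1
    rw [hAs n]
    module
  -- invariant
  have hwy : ∀ n, ‖w n - y‖ ≤ (M + 1) * ∑ k ∈ Finset.range n, μ k := by
    intro n
    induction n with
    | zero => simp [hw0]
    | succ n ih =>
      have hsum : ∑ k ∈ Finset.range n, μ k ≤ 2 * κ := by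
        have : ∑ k ∈ Finset.range n, μ k = κ * ∑ k ∈ Finset.range n, ((1:ℝ)/2) ^ k := by
          simp only [hμdef, Finset.mul_sum]
        rw [this]; nlinarith [sum_geometric_two_le n, hκpos]
      have hwy1 : ‖w n - y‖ ≤ 1 := le_trans ih (by nlinarith)
      have hdn : infDist (w n) C ≤ M - 1 := by
        have h1 : infDist (w n) C ≤ infDist y C + dist (w n) y := infDist_le_infDist_add_dist
        rw [dist_eq_norm] at h1
        simp only [hM]
        linarith
      have hcn : ‖c n - w n‖ ≤ M := by
        have h := hcd n
        rw [dist_eq_norm, norm_sub_rev] at h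
        linarith [he1 n]
      have hstep : ‖w (n+1) - w n‖ ≤ μ n * M := by
        rw [hwdiff n, norm_smul, norm_smul, Real.norm_eq_abs, Real.norm_eq_abs,
          abs_of_pos (inv_pos.mpr (hApos (n+1))), abs_of_pos (hμpos n)]
        have hinv : (A (n+1))⁻¹ ≤ 1 := inv_le_one_of_one_le₀ (hA1 (n+1))
        have h1 : μ n * ‖c n - w n‖ ≤ μ n * M :=
          mul_le_mul_of_nonneg_left hcn (hμpos n).le
        have hnn : 0 ≤ μ n * ‖c n - w n‖ := mul_nonneg (hμpos n).le (norm_nonneg _)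
        have h2 := mul_le_mul_of_nonneg_right hinv hnn
        rw [one_mul] at h2
        exact le_trans h2 h1
      have htri : ‖w (n+1) - y‖ ≤ ‖w (n+1) - w n‖ + ‖w n - y‖ := by
        have := dist_triangle (w (n+1)) (w n) y
        simpa [dist_eq_norm] using this
      rw [Finset.sum_range_succ]
      nlinarith [hμpos n]
  have hsum2 : ∀ n, ∑ k ∈ Finset.range n, μ k ≤ 2 * κ := by
    intro n
    have : ∑ k ∈ Finset.range n, μ k = κ * ∑ k ∈ Finset.range n, ((1:ℝ)/2) ^ k := by
      simp only [hμdef, Finset.mul_sum]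
    rw [this]; nlinarith [sum_geometric_two_le n, hκpos]
  have hwy1 : ∀ n, ‖w n - y‖ ≤ 1 := fun n => le_trans (hwy n) (by nlinarith [hsum2 n])
  have hwyε : ∀ n, ‖w n - y‖ ≤ ε := fun n => le_trans (hwy n) (by nlinarith [hsum2 n])
  have hdM : ∀ n, infDist (w n) C ≤ M - 1 := by
    intro n
    have h1 : infDist (w n) C ≤ infDist y C + dist (w n) y := infDist_le_infDist_add_dist
    rw [dist_eq_norm] at h1
    simp only [hM]
    linarith [hwy1 n]
  have hdnn : ∀ n, 0 ≤ infDist (w n) C := fun n => infDist_nonneg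
  -- the quadratic recursion identity
  have hkey : ∀ n (x : H), A n * ‖x - w n‖ ^ 2 + μ n * ‖x - c n‖ ^ 2
      = A (n+1) * ‖x - w (n+1)‖ ^ 2 + (A n * μ n / A (n+1)) * ‖w n - c n‖ ^ 2 := by
    intro n x
    have h := quad_id (A n) (μ n) (hApos n) (hμpos n) (w n) (c n) x
    rw [← hAs n] at h
    rw [hwrec n]
    exact h
  -- step estimate for c
  have hcstep : ∀ n, ‖c (n+1) - c n‖ ≤ (3 * (M + 1) * κ) * (3/4) ^ n := by
    intro n
    set d1 := infDist (w n) C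
    set d2 := infDist (w (n+1)) C
    have i1 : ‖c (n+1) - w (n+1)‖ < d2 + e (n+1) := by
      have := hcd (n+1); rwa [dist_eq_norm, norm_sub_rev] at this
    have i2 : d2 ≤ ‖c n - w (n+1)‖ := by
      have := infDist_le_dist_of_mem (s := C) (x := w (n+1)) (hcC n)
      rwa [dist_eq_norm, norm_sub_rev] at this
    have i3 : d1 ≤ ‖c (n+1) - w n‖ := by
      have := infDist_le_dist_of_mem (s := C) (x := w n) (hcC (n+1))
      rwa [dist_eq_norm, norm_sub_rev] at this
    have i4 : ‖c n - w n‖ < d1 + e n := by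
      have := hcd n; rwa [dist_eq_norm, norm_sub_rev] at this
    have idA := hkey n (c (n+1))
    have idB := hkey n (c n)
    have hz : ‖c n - c n‖ = 0 := by simp
    -- bound μ n * ‖c (n+1) - c n‖ ^ 2
    have hρ : (A n * μ n / A (n+1)) * ‖w n - c n‖ ^ 2
        ≤ A n * ‖c n - w n‖ ^ 2 - A (n+1) * ‖c n - w (n+1)‖ ^ 2 := by
      rw [hz] at idB
      nlinarith [idB]
    have hb1 : A (n+1) * ‖c (n+1) - w (n+1)‖ ^ 2 ≤ A (n+1) * (d2 + e (n+1)) ^ 2 :=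
      mul_le_mul_of_nonneg_left
        (pow_le_pow_left₀ (norm_nonneg _) i1.le 2) (hApos (n+1)).le
    have hb2 : A (n+1) * d2 ^ 2 ≤ A (n+1) * ‖c n - w (n+1)‖ ^ 2 :=
      mul_le_mul_of_nonneg_left
        (pow_le_pow_left₀ (infDist_nonneg) i2 2) (hApos (n+1)).le
    have hb3 : A n * d1 ^ 2 ≤ A n * ‖c (n+1) - w n‖ ^ 2 :=
      mul_le_mul_of_nonneg_left
        (pow_le_pow_left₀ (infDist_nonneg) i3 2) (hApos n).le
    have hb4 : A n * ‖c n - w n‖ ^ 2 ≤ A n * (d1 + e n) ^ 2 :=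
      mul_le_mul_of_nonneg_left
        (pow_le_pow_left₀ (norm_nonneg _) i4.le 2) (hApos n).le
    have hμΔ : μ n * ‖c (n+1) - c n‖ ^ 2
        ≤ A (n+1) * ((d2 + e (n+1)) ^ 2 - d2 ^ 2) + A n * ((d1 + e n) ^ 2 - d1 ^ 2) := by
      linarith [idA, hρ, hb1, hb2, hb3, hb4]
    have hd1M : d1 ≤ M - 1 := hdM n
    have hd2M : d2 ≤ M - 1 := hdM (n+1)
    have he' : e (n+1) ≤ e n := by
      rw [hedef n, hedef (n+1)]
      have hp : ((1:ℝ)/4) ^ (n+1) ≤ ((1:ℝ)/4) ^ n :=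
        pow_le_pow_of_le_one (by norm_num) (by norm_num) (Nat.le_succ n)
      exact mul_le_mul_of_nonneg_left hp (by positivity)
    have hnum : μ n * ‖c (n+1) - c n‖ ^ 2 ≤ 6 * (2 * M + 1) * e n := by
      have h2 : (d2 + e (n+1)) ^ 2 - d2 ^ 2 = e (n+1) * (2 * d2 + e (n+1)) := by ring
      have h1 : (d1 + e n) ^ 2 - d1 ^ 2 = e n * (2 * d1 + e n) := by ring
      have X2nn : 0 ≤ e (n+1) * (2 * d2 + e (n+1)) :=
        mul_nonneg (hepos (n+1)).le (by linarith [hdnn (n+1), hepos (n+1)])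
      have X1nn : 0 ≤ e n * (2 * d1 + e n) :=
        mul_nonneg (hepos n).le (by linarith [hdnn n, hepos n])
      have c1 : e (n+1) * (2 * d2 + e (n+1)) ≤ e n * (2 * M + 1) := by
        apply mul_le_mul he' (by linarith [hd2M, he1 (n+1)])
          (by linarith [hdnn (n+1), hepos (n+1)]) (hepos n).le
      have c2 : e n * (2 * d1 + e n) ≤ e n * (2 * M + 1) :=
        mul_le_mul_of_nonneg_left (by linarith [hd1M, he1 n]) (hepos n).le
      have t1 : A (n+1) * ((d2 + e (n+1)) ^ 2 - d2 ^ 2) ≤ 3 * (e n * (2 * M + 1)) := by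
        rw [h2]
        calc A (n+1) * (e (n+1) * (2 * d2 + e (n+1)))
            ≤ 3 * (e (n+1) * (2 * d2 + e (n+1))) :=
              mul_le_mul_of_nonneg_right (hA3 (n+1)) X2nn
          _ ≤ 3 * (e n * (2 * M + 1)) := by linarith [c1]
      have t2 : A n * ((d1 + e n) ^ 2 - d1 ^ 2) ≤ 3 * (e n * (2 * M + 1)) := by
        rw [h1]
        calc A n * (e n * (2 * d1 + e n))
            ≤ 3 * (e n * (2 * d1 + e n)) := mul_le_mul_of_nonneg_right (hA3 n) X1nn
          _ ≤ 3 * (e n * (2 * M + 1)) := by linarith [c2]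
      nlinarith [hμΔ, t1, t2]
    have hsq : ‖c (n+1) - c n‖ ^ 2 ≤ ((3 * (M + 1) * κ) * (3/4) ^ n) ^ 2 := by
      have hratio : ‖c (n+1) - c n‖ ^ 2 ≤ 6 * (2 * M + 1) * κ ^ 2 * (1/2) ^ n := by
        have hμn : μ n = κ * (1/2)^n := hμdef n
        have hen : e n = κ^3 * (1/4)^n := hedef n
        have hq : (1/4:ℝ)^n = (1/2:ℝ)^n * (1/2:ℝ)^n := by
          rw [← mul_pow]; norm_num
        have h3 : (κ * (1/2:ℝ)^n) * ‖c (n+1) - c n‖ ^ 2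
            ≤ (κ * (1/2:ℝ)^n) * (6 * (2*M+1) * κ^2 * (1/2:ℝ)^n) := by
          calc (κ * (1/2:ℝ)^n) * ‖c (n+1) - c n‖ ^ 2
              = μ n * ‖c (n+1) - c n‖ ^ 2 := by rw [hμn]
            _ ≤ 6 * (2 * M + 1) * e n := hnum
            _ = (κ * (1/2:ℝ)^n) * (6 * (2*M+1) * κ^2 * (1/2:ℝ)^n) := by
                rw [hen, hq]; ring
        exact le_of_mul_le_mul_left h3 (by positivity)
      have hcomp : 6 * (2 * M + 1) * κ ^ 2 * (1/2) ^ n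
          ≤ (9 * (M + 1) ^ 2 * κ ^ 2) * ((9/16) ^ n) := by
        have hpow : ((1:ℝ)/2) ^ n ≤ (9/16 : ℝ) ^ n :=
          pow_le_pow_left₀ (by norm_num) (by norm_num) n
        have hcoef : 6 * (2 * M + 1) ≤ 9 * (M + 1) ^ 2 := by nlinarith
        have h916 : (0:ℝ) < (9/16:ℝ)^n := by positivity
        have h6nn : (0:ℝ) ≤ 6 * (2 * M + 1) * κ ^ 2 := by
          have := mul_nonneg (show (0:ℝ) ≤ 2 * M + 1 by linarith) (sq_nonneg κ)
          linarith
        have hAB : 6 * (2 * M + 1) * κ ^ 2 ≤ 9 * (M + 1) ^ 2 * κ ^ 2 := by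
          have := mul_le_mul_of_nonneg_right hcoef (sq_nonneg κ)
          linarith
        calc 6 * (2 * M + 1) * κ ^ 2 * (1/2) ^ n
            ≤ 6 * (2 * M + 1) * κ ^ 2 * (9/16) ^ n :=
              mul_le_mul_of_nonneg_left hpow h6nn
          _ ≤ 9 * (M + 1) ^ 2 * κ ^ 2 * (9/16) ^ n :=
              mul_le_mul_of_nonneg_right hAB h916.le
          _ = (9 * (M + 1) ^ 2 * κ ^ 2) * ((9/16) ^ n) := by ring
      calc ‖c (n+1) - c n‖ ^ 2 ≤ (9 * (M + 1) ^ 2 * κ ^ 2) * ((9/16) ^ n) := le_trans hratio hcomp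
        _ = ((3 * (M + 1) * κ) * (3/4) ^ n) ^ 2 := by
            rw [show (9/16:ℝ) = (3/4)^2 by norm_num, ← pow_mul, mul_comm 2 n, pow_mul]
            ring
    have hKpos : 0 ≤ (3 * (M + 1) * κ) * (3/4) ^ n := by positivity
    nlinarith [hsq, norm_nonneg (c (n+1) - c n), hKpos]
  -- Cauchy sequences
  have hcauchyc : CauchySeq c := by
    apply cauchySeq_of_le_geometric (3/4) (3 * (M + 1) * κ) (by norm_num)
    intro n
    rw [dist_eq_norm, norm_sub_rev]
    exact hcstep n
  have hcauchyw : CauchySeq w := by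
    apply cauchySeq_of_le_geometric (1/2) (κ * M) (by norm_num)
    intro n
    rw [dist_eq_norm, norm_sub_rev]
    have hd : w (n+1) - w n = (A (n+1))⁻¹ • (μ n • (c n - w n)) := hwdiff n
    rw [hd, norm_smul, norm_smul, Real.norm_eq_abs, Real.norm_eq_abs,
      abs_of_pos (inv_pos.mpr (hApos (n+1))), abs_of_pos (hμpos n)]
    have hcn : ‖c n - w n‖ ≤ M := by
      have h := hcd n
      rw [dist_eq_norm, norm_sub_rev] at h
      linarith [he1 n, hdM n]
    have hinv : (A (n+1))⁻¹ ≤ 1 := inv_le_one_of_one_le₀ (hA1 (n+1))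
    have hμn : μ n = κ * (1/2)^n := hμdef n
    rw [hμn]
    have hnn : (0:ℝ) ≤ κ * (1/2)^n * ‖c n - w n‖ := by positivity
    have h2 := mul_le_mul_of_nonneg_right hinv hnn
    rw [one_mul] at h2
    have h1 : κ * (1/2)^n * ‖c n - w n‖ ≤ κ * M * (1/2)^n := by
      have h3 := mul_le_mul_of_nonneg_left hcn (show (0:ℝ) ≤ κ * (1/2)^n by positivity)
      calc κ * (1/2)^n * ‖c n - w n‖ ≤ κ * (1/2)^n * M := h3
        _ = κ * M * (1/2)^n := by ring
    exact le_trans h2 h1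
  obtain ⟨z, hz⟩ := cauchySeq_tendsto_of_complete hcauchyc
  obtain ⟨wl, hwl⟩ := cauchySeq_tendsto_of_complete hcauchyw
  have hzC : z ∈ C := hcl.mem_of_tendsto hz (Filter.Eventually.of_forall hcC)
  have hwlε : ‖wl - y‖ ≤ ε := by
    have ht : Tendsto (fun n => ‖w n - y‖) atTop (𝓝 ‖wl - y‖) :=
      ((hwl.sub tendsto_const_nhds).norm)
    exact le_of_tendsto ht (Filter.Eventually.of_forall hwyε)
  refine ⟨wl, z, hwlε, hzC, ?_⟩
  have he0 : Tendsto e atTop (𝓝 0) := by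
    have h := (tendsto_pow_atTop_nhds_zero_of_lt_one (show (0:ℝ) ≤ 1/4 by norm_num)
      (by norm_num)).const_mul (κ^3)
    rw [mul_zero] at h
    rw [show e = (fun n => κ ^ 3 * (1/4:ℝ) ^ n) from funext hedef]
    exact h
  apply le_antisymm
  · apply le_infDist' hne
    intro cc hcc
    have hle : ∀ n, dist (w n) (c n) ≤ dist (w n) cc + e n := fun n =>
      le_trans (hcd n).le (by linarith [infDist_le_dist_of_mem (s := C) (x := w n) hcc])
    have h1 : Tendsto (fun n => dist (w n) (c n)) atTop (𝓝 (dist wl z)) := hwl.dist hz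
    have h2 : Tendsto (fun n => dist (w n) cc + e n) atTop (𝓝 (dist wl cc + 0)) :=
      (hwl.dist tendsto_const_nhds).add he0
    have := le_of_tendsto_of_tendsto' h1 h2 hle
    rw [add_zero] at this
    rwa [dist_eq_norm] at this
  · have := infDist_le_dist_of_mem (s := C) (x := wl) hzC
    rwa [dist_eq_norm] at this




lemma projSet_inner_le {C : Set H} {w z : H} (hz : z ∈ projSet C w) {c : H} (hc : c ∈ C) :
    2 * ⟪w - z, c - z⟫ ≤ ‖c - z‖ ^ 2 := by
  have h1 : ‖w - z‖ ≤ ‖w - c‖ := by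
    rw [hz.2]
    simpa [dist_eq_norm] using infDist_le_dist_of_mem hc
  have h2 : ‖w - c‖ ^ 2 = ‖w - z‖ ^ 2 - 2 * ⟪w - z, c - z⟫ + ‖c - z‖ ^ 2 := by
    have hwc : w - c = (w - z) - (c - z) := by abel
    rw [hwc, norm_sub_sq_real]
  have h3 : ‖w - z‖ ^ 2 ≤ ‖w - c‖ ^ 2 := pow_le_pow_left₀ (norm_nonneg _) h1 2
  linarith


theorem projection_singleton_of_locally_prox_regular
    [CompleteSpace H] (C : Set H) (hne : C.Nonempty) (hcl : IsClosed C)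
    (hprox : IsLocallyProxRegular C) :
    ∀ B : Set H, Bornology.IsBounded B → (B ∩ C).Nonempty →
      ∃ ℓ > 0, ∀ x ∈ B, Metric.infDist x C < ℓ →
        ∃! z : H, z ∈ C ∧ ‖x - z‖ = Metric.infDist x C := by
  intro B hB _hBC
  obtain ⟨R, hRB⟩ := hB.subset_closedBall 0
  obtain ⟨η, hη, hP⟩ := hprox (closedBall (0:H) (R + 4)) isBounded_closedBall
  refine ⟨min η 1, lt_min hη one_pos, ?_⟩
  intro x hxB hxd
  have hxR : ‖x‖ ≤ R := by
    have := hRB hxB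
    simpa [mem_closedBall, dist_zero_right] using this
  obtain ⟨d, hd⟩ : ∃ d : ℝ, d = infDist x C := ⟨_, rfl⟩
  rw [← hd] at hxd ⊢
  have hd0 : 0 ≤ d := hd ▸ infDist_nonneg
  have hd1 : d < 1 := lt_of_lt_of_le hxd (min_le_right _ _)
  rcases eq_or_lt_of_le hd0 with hdz | hdpos
  · -- distance zero : x ∈ C
    have hxC : x ∈ C := by
      rw [hcl.mem_iff_infDist_zero hne, ← hd, ← hdz]
    refine ⟨x, ⟨hxC, by rw [sub_self, norm_zero, ← hdz]⟩, ?_⟩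
    rintro z ⟨_, hz2⟩
    have h0 : ‖x - z‖ = 0 := by rw [hz2, ← hdz]
    exact (norm_sub_eq_zero_iff.mp h0).symm
  · -- positive distance
    obtain ⟨t, ht⟩ : ∃ t : ℝ, t = (d + min η 1) / 2 := ⟨_, rfl⟩
    have htd : d < t := by rw [ht]; linarith
    have htm : t < min η 1 := by rw [ht]; linarith
    have htη : t < η := lt_of_lt_of_le htm (min_le_left _ _)
    have ht1 : t ≤ 1 := le_of_lt (lt_of_lt_of_le htm (min_le_right _ _))
    have ht0 : 0 < t := lt_trans hdpos htd
    -- key proximal inequality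
    have key : ∀ z wp, z ∈ projSet C wp → ‖z‖ ≤ R + 4 → wp ≠ z →
        ∀ cc ∈ C, 2 * t * ⟪wp - z, cc - z⟫ ≤ ‖wp - z‖ * ‖cc - z‖ ^ 2 := by
      intro z wp hzp hzB hne' cc hcc
      have hzC : z ∈ C := hzp.1
      have hv : wp - z ≠ 0 := sub_ne_zero.mpr (Ne.symm (Ne.symm hne'))
      have hvcone : wp - z ∈ proxNormalCone C z := by
        refine ⟨1, one_pos, ?_⟩
        have hzz : z + (1:ℝ) • (wp - z) = wp := by rw [one_smul]; abel
        rw [hzz]; exact hzp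
      have hmem : z ∈ C ∩ closedBall (0:H) (R + 4) :=
        ⟨hzC, by simpa [mem_closedBall, dist_zero_right] using hzB⟩
      have hp := hP t ⟨ht0.le, htη⟩ z hmem (wp - z) hvcone hv
      have hineq := projSet_inner_le hp hcc
      have hsimp : (z + t • ‖wp - z‖⁻¹ • (wp - z)) - z = t • ‖wp - z‖⁻¹ • (wp - z) := by abel
      rw [hsimp, real_inner_smul_left, real_inner_smul_left] at hineq
      have hnv : 0 < ‖wp - z‖ := norm_pos_iff.mpr hv
      have h2 := mul_le_mul_of_nonneg_left hineq hnv.le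
      have hval : ‖wp - z‖ * (2 * (t * (‖wp - z‖⁻¹ * ⟪wp - z, cc - z⟫)))
          = 2 * t * ⟪wp - z, cc - z⟫ := by
        field_simp
      rw [hval] at h2
      exact h2
    -- pairwise estimate
    have pair : ∀ z₁ w₁ z₂ w₂, z₁ ∈ projSet C w₁ → z₂ ∈ projSet C w₂ →
        ‖z₁‖ ≤ R + 4 → ‖z₂‖ ≤ R + 4 → w₁ ≠ z₁ → w₂ ≠ z₂ →
        (2 * t - ‖w₁ - z₁‖ - ‖w₂ - z₂‖) * ‖z₂ - z₁‖ ^ 2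
          ≤ 2 * t * (‖w₁ - w₂‖ * ‖z₂ - z₁‖) := by
      intro z₁ w₁ z₂ w₂ h1 h2 hB1 hB2 hn1 hn2
      have k1 := key z₁ w₁ h1 hB1 hn1 z₂ h2.1
      have k2 := key z₂ w₂ h2 hB2 hn2 z₁ h1.1
      rw [norm_sub_rev z₁ z₂] at k2
      have e1 : ⟪w₂ - z₂, z₁ - z₂⟫ = - ⟪w₂ - z₂, z₂ - z₁⟫ := by
        rw [show z₁ - z₂ = -(z₂ - z₁) by abel, inner_neg_right]
      have e1t : 2 * t * ⟪w₂ - z₂, z₁ - z₂⟫ = 2 * t * (- ⟪w₂ - z₂, z₂ - z₁⟫) := by rw [e1]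
      have e2 : ⟪w₁ - z₁, z₂ - z₁⟫ - ⟪w₂ - z₂, z₂ - z₁⟫
          = ⟪w₁ - w₂, z₂ - z₁⟫ + ‖z₂ - z₁‖ ^ 2 := by
        rw [← inner_sub_left]
        have hrw : (w₁ - z₁) - (w₂ - z₂) = (w₁ - w₂) + (z₂ - z₁) := by abel
        rw [hrw, inner_add_left, real_inner_self_eq_norm_sq]
      have e2t : 2 * t * (⟪w₁ - z₁, z₂ - z₁⟫ - ⟪w₂ - z₂, z₂ - z₁⟫)
          = 2 * t * (⟪w₁ - w₂, z₂ - z₁⟫ + ‖z₂ - z₁‖ ^ 2) := by rw [e2]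
      have e3 : -(‖w₁ - w₂‖ * ‖z₂ - z₁‖) ≤ ⟪w₁ - w₂, z₂ - z₁⟫ := by
        have habs := abs_real_inner_le_norm (w₁ - w₂) (z₂ - z₁)
        linarith [neg_abs_le (⟪w₁ - w₂, z₂ - z₁⟫ : ℝ)]
      have e3t := mul_le_mul_of_nonneg_left e3 (by linarith : (0:ℝ) ≤ 2 * t)
      nlinarith [k1, k2, e1t, e2t, e3t]
    -- existence via approximate projections
    obtain ⟨α, hα⟩ : ∃ α : ℕ → ℝ,
        ∀ n, α n = min (min (d/2) ((t - d)/2)) (1/(n+1)) := ⟨_, fun _ => rfl⟩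
    have hαpos : ∀ n, 0 < α n := by
      intro n
      rw [hα]
      exact lt_min (lt_min (by linarith) (by linarith)) (by positivity)
    have hαd : ∀ n, α n ≤ d / 2 := fun n => by
      rw [hα]; exact le_trans (min_le_left _ _) (min_le_left _ _)
    have hαt : ∀ n, α n ≤ (t - d) / 2 := fun n => by
      rw [hα]; exact le_trans (min_le_left _ _) (min_le_right _ _)
    have hα1 : ∀ n, α n ≤ 1 / (n + 1) := fun n => by
      rw [hα]; exact min_le_right _ _
    have hαanti : ∀ N n, N ≤ n → α n ≤ α N := by
      intro N n hNn
      rw [hα, hα]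
      refine min_le_min le_rfl ?_
      apply one_div_le_one_div_of_le (by positivity)
      have := (Nat.cast_le (α := ℝ)).mpr hNn
      linarith
    have hex : ∀ n : ℕ, ∃ w z : H, ‖w - x‖ ≤ α n ∧ z ∈ projSet C w :=
      fun n => exists_proj_near hne hcl x (hαpos n)
    choose ws zs hws hzs using hex
    have hdn_eq : ∀ n, ‖ws n - zs n‖ = infDist (ws n) C := fun n => (hzs n).2
    have hdn_le : ∀ n, infDist (ws n) C ≤ d + α n := by
      intro n
      have h1 : infDist (ws n) C ≤ infDist x C + dist (ws n) x := infDist_le_infDist_add_dist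
      rw [dist_eq_norm, ← hd] at h1
      linarith [hws n]
    have hdn_ge : ∀ n, d - α n ≤ infDist (ws n) C := by
      intro n
      have h1 : infDist x C ≤ infDist (ws n) C + dist x (ws n) := infDist_le_infDist_add_dist
      rw [dist_eq_norm, norm_sub_rev, ← hd] at h1
      linarith [hws n]
    have hdn_pos : ∀ n, 0 < infDist (ws n) C := by
      intro n
      have := hdn_ge n
      have := hαd n
      linarith
    have hwz : ∀ n, ws n ≠ zs n := by
      intro n hcon
      have h0 : ‖ws n - zs n‖ = 0 := by rw [hcon, sub_self, norm_zero]
      rw [hdn_eq n] at h0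
      exact absurd h0 (ne_of_gt (hdn_pos n))
    have hzball : ∀ n, ‖zs n‖ ≤ R + 4 := by
      intro n
      have h1 : ‖zs n‖ = ‖(zs n - ws n) + (ws n - x) + x‖ := by congr 1; abel
      have h2 : ‖(zs n - ws n) + (ws n - x) + x‖ ≤ ‖zs n - ws n‖ + ‖ws n - x‖ + ‖x‖ :=
        norm_add₃_le
      have h3 : ‖zs n - ws n‖ = ‖ws n - zs n‖ := norm_sub_rev _ _
      have h4 := hdn_le n
      have h5 := hαd n
      rw [h1]
      rw [h3, hdn_eq n] at h2
      linarith [hws n]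
    have hΔ : ∀ n m, ‖zs m - zs n‖ ≤ 2 * t * (α n + α m) / (t - d) := by
      intro n m
      have hp := pair (zs n) (ws n) (zs m) (ws m) (hzs n) (hzs m)
        (hzball n) (hzball m) (hwz n) (hwz m)
      have hsum : ‖ws n - zs n‖ + ‖ws m - zs m‖ ≤ d + t := by
        have h1 := hdn_le n; have h2 := hdn_le m
        have h3 := hαt n; have h4 := hαt m
        rw [hdn_eq n, hdn_eq m]
        linarith
      have hwd : ‖ws n - ws m‖ ≤ α n + α m := by
        have h1 : ‖ws n - ws m‖ = ‖(ws n - x) + (x - ws m)‖ := by congr 1; abel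
        have h2 : ‖(ws n - x) + (x - ws m)‖ ≤ ‖ws n - x‖ + ‖x - ws m‖ := norm_add_le _ _
        rw [norm_sub_rev x (ws m)] at h2
        rw [h1]
        linarith [hws n, hws m]
      have hΔnn : 0 ≤ ‖zs m - zs n‖ := norm_nonneg _
      rcases eq_or_lt_of_le hΔnn with h0 | hpos'
      · rw [← h0]
        exact div_nonneg (by nlinarith [hαpos n, hαpos m, ht0]) (by linarith)
      · rw [le_div_iff₀ (by linarith : (0:ℝ) < t - d)]
        have hstep1 : (t - d) * ‖zs m - zs n‖ ^ 2
            ≤ (2 * t - ‖ws n - zs n‖ - ‖ws m - zs m‖) * ‖zs m - zs n‖ ^ 2 := by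
          apply mul_le_mul_of_nonneg_right _ (sq_nonneg _)
          linarith
        have hstep2 : 2 * t * (‖ws n - ws m‖ * ‖zs m - zs n‖)
            ≤ 2 * t * ((α n + α m) * ‖zs m - zs n‖) := by
          apply mul_le_mul_of_nonneg_left _ (by linarith : (0:ℝ) ≤ 2 * t)
          exact mul_le_mul_of_nonneg_right hwd hΔnn
        nlinarith [hp, hstep1, hstep2, hpos']
    have hzcauchy : CauchySeq zs := by
      apply cauchySeq_of_le_tendsto_0 (fun N => 2 * t * (α N + α N) / (t - d))
      · intro n m N hNn hNm
        rw [dist_eq_norm]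
        calc ‖zs n - zs m‖ ≤ 2 * t * (α m + α n) / (t - d) := hΔ m n
          _ ≤ 2 * t * (α N + α N) / (t - d) := by
              apply (div_le_div_iff_of_pos_right (by linarith : (0:ℝ) < t - d)).mpr
              have h1 := hαanti N m hNm
              have h2 := hαanti N n hNn
              nlinarith [ht0]
      · have hα0 : Tendsto α atTop (𝓝 0) := by
          apply squeeze_zero (fun n => (hαpos n).le) hα1
          exact tendsto_one_div_add_atTop_nhds_zero_nat
        have heq : (fun N => 2 * t * (α N + α N) / (t - d))
            = fun N => (4 * t / (t - d)) * α N := by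
          funext N; field_simp; ring
        rw [heq]
        have := hα0.const_mul (4 * t / (t - d))
        simpa using this
    obtain ⟨zl, hzl⟩ := cauchySeq_tendsto_of_complete hzcauchy
    have hzlC : zl ∈ C := hcl.mem_of_tendsto hzl (Filter.Eventually.of_forall fun n => (hzs n).1)
    have hα0 : Tendsto α atTop (𝓝 0) := by
      apply squeeze_zero (fun n => (hαpos n).le) hα1
      exact tendsto_one_div_add_atTop_nhds_zero_nat
    have hzlnorm : ‖x - zl‖ = d := by
      apply le_antisymm
      · have h1 : Tendsto (fun n => ‖x - zs n‖) atTop (𝓝 ‖x - zl‖) :=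
          ((tendsto_const_nhds.sub hzl).norm)
        have h2 : Tendsto (fun n => d + 2 * α n) atTop (𝓝 (d + 2 * 0)) :=
          tendsto_const_nhds.add (hα0.const_mul 2)
        rw [mul_zero, add_zero] at h2
        apply le_of_tendsto_of_tendsto' h1 h2
        intro n
        have ha : ‖x - zs n‖ = ‖(x - ws n) + (ws n - zs n)‖ := by congr 1; abel
        have hb : ‖(x - ws n) + (ws n - zs n)‖ ≤ ‖x - ws n‖ + ‖ws n - zs n‖ := norm_add_le _ _
        rw [norm_sub_rev x (ws n)] at hb
        rw [ha]
        have hc := hdn_le n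
        rw [← hdn_eq n] at hc
        linarith [hws n]
      · have h1 : infDist x C ≤ dist x zl := infDist_le_dist_of_mem hzlC
        rw [dist_eq_norm, ← hd] at h1
        exact h1
    refine ⟨zl, ⟨hzlC, by rw [hzlnorm]⟩, ?_⟩
    rintro z' ⟨hz'C, hz'n⟩
    have hz'd : ‖x - z'‖ = d := hz'n
    have hproj : ∀ z : H, z ∈ C → ‖x - z‖ = d → z ∈ projSet C x := by
      intro z h1 h2
      exact ⟨h1, by rw [h2, hd]⟩
    have hxz' : x ≠ z' := by
      intro hcon
      rw [hcon, sub_self, norm_zero] at hz'd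
      exact absurd hz'd.symm (ne_of_gt hdpos)
    have hxzl : x ≠ zl := by
      intro hcon
      rw [hcon, sub_self, norm_zero] at hzlnorm
      exact absurd hzlnorm.symm (ne_of_gt hdpos)
    have hz'ball : ‖z'‖ ≤ R + 4 := by
      have h1 : ‖z'‖ = ‖(z' - x) + x‖ := by congr 1; abel
      have h2 : ‖(z' - x) + x‖ ≤ ‖z' - x‖ + ‖x‖ := norm_add_le _ _
      rw [norm_sub_rev z' x, hz'd] at h2
      rw [h1]
      linarith
    have hzlball : ‖zl‖ ≤ R + 4 := by
      have h1 : ‖zl‖ = ‖(zl - x) + x‖ := by congr 1; abel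
      have h2 : ‖(zl - x) + x‖ ≤ ‖zl - x‖ + ‖x‖ := norm_add_le _ _
      rw [norm_sub_rev zl x, hzlnorm] at h2
      rw [h1]
      linarith
    have hp := pair zl x z' x (hproj zl hzlC hzlnorm) (hproj z' hz'C hz'd)
      hzlball hz'ball hxzl hxz'
    rw [sub_self x, norm_zero, hzlnorm, hz'd, zero_mul, mul_zero] at hp
    have hc : (0:ℝ) < 2 * t - d - d := by linarith
    rw [← mul_zero (2 * t - d - d)] at hp
    have hzero : ‖z' - zl‖ ^ 2 ≤ 0 := le_of_mul_le_mul_left hp hc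
    have hz0 : ‖z' - zl‖ ^ 2 = 0 := le_antisymm hzero (sq_nonneg _)
    exact sub_eq_zero.mp (norm_eq_zero.mp (sq_eq_zero_iff.mp hz0))
end
end

section
/- Two-point hypomonotonicity of the proximal normal cone of a locally prox-regular set: let H be a real Hilbert space and C ⊆ H a nonempty closed locally prox-regular set. Then for every bounded set B ⊆ H there exists a constant E_B > 0 such that for all x₁, x₂ ∈ C ∩ B, all v₁ ∈ N(C, x₁) and all v₂ ∈ N(C, x₂), one has ⟨v₁ − v₂, x₁ − x₂⟩ ≥ −E_B (‖v₁‖ + ‖v₂‖) ‖x₁ − x₂‖². -/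
open Set Metric MeasureTheory Filter
open scoped RealInnerProductSpace NNReal Topology

noncomputable section

variable {H : Type*} [NormedAddCommGroup H] [InnerProductSpace ℝ H]

lemma proj_key {C : Set H} {x y : H} (hy : y ∈ C) {t : ℝ} (ht : 0 < t) {v : H} (hv : v ≠ 0)
    (hx : x ∈ projSet C (x + t • ‖v‖⁻¹ • v)) :
    ⟪v, x - y⟫ ≥ -(‖v‖ / (2 * t) * ‖x - y‖ ^ 2) := by
  set u : H := ‖v‖⁻¹ • v with hu
  have hnu : ‖u‖ = 1 := by
    rw [hu, norm_smul, norm_inv, norm_norm]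
    field_simp [norm_ne_zero_iff.mpr hv]
  obtain ⟨hxC, hxd⟩ := hx
  have hdist : Metric.infDist (x + t • u) C = t := by
    rw [← hxd]
    simp [norm_smul, hnu, abs_of_pos ht]
  have hle : t ≤ ‖x + t • u - y‖ := by
    have h := Metric.infDist_le_dist_of_mem (x := x + t • u) hy
    rw [dist_eq_norm, hdist] at h
    exact h
  have hsq : t ^ 2 ≤ ‖(x - y) + t • u‖ ^ 2 := by
    have : x + t • u - y = (x - y) + t • u := by abel
    rw [← this]
    exact pow_le_pow_left₀ ht.le hle 2
  rw [norm_add_sq_real, norm_smul, hnu, real_inner_smul_right] at hsq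
  have h2tpos : (0:ℝ) < 2 * t := by linarith
  have hkey : -‖x - y‖ ^ 2 ≤ 2 * t * ⟪x - y, u⟫ := by
    have hts : ‖t‖ = t := by rw [Real.norm_eq_abs, abs_of_pos ht]
    nlinarith [hsq]
  have hinner : ⟪x - y, u⟫ ≥ -(‖x - y‖ ^ 2 / (2 * t)) := by
    rw [ge_iff_le, show -(‖x - y‖ ^ 2 / (2 * t)) = (-‖x - y‖ ^ 2) / (2 * t) by ring,
      div_le_iff₀ h2tpos]
    linarith
  have hvpos : (0:ℝ) < ‖v‖ := norm_pos_iff.mpr hv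
  have h2 : ⟪x - y, v⟫ = ‖v‖ * ⟪x - y, u⟫ := by
    rw [hu, real_inner_smul_right]
    field_simp
  rw [real_inner_comm, h2]
  have := mul_le_mul_of_nonneg_left hinner hvpos.le
  calc ‖v‖ * ⟪x - y, u⟫ ≥ ‖v‖ * -(‖x - y‖ ^ 2 / (2 * t)) := this
    _ = -(‖v‖ / (2 * t) * ‖x - y‖ ^ 2) := by ring

theorem two_point_hypomonotonicity
    [CompleteSpace H] (C : Set H) (hne : C.Nonempty) (hcl : IsClosed C)
    (hprox : IsLocallyProxRegular C) :
    ∀ B : Set H, Bornology.IsBounded B → ∃ E > 0,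
      ∀ x₁ ∈ C ∩ B, ∀ x₂ ∈ C ∩ B,
        ∀ v₁ ∈ proxNormalCone C x₁, ∀ v₂ ∈ proxNormalCone C x₂,
          ⟪v₁ - v₂, x₁ - x₂⟫ ≥ -(E * (‖v₁‖ + ‖v₂‖) * ‖x₁ - x₂‖ ^ 2) := by
  intro B hB
  obtain ⟨η, hη, hreg⟩ := hprox B hB
  refine ⟨1 / η, by positivity, ?_⟩
  intro x₁ hx₁ x₂ hx₂ v₁ hv₁ v₂ hv₂
  set t := η / 2 with ht
  have ht0 : 0 < t := by positivity
  have htmem : t ∈ Set.Ico (0:ℝ) η := ⟨ht0.le, by linarith⟩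
  have key : ∀ (x y : H), x ∈ C ∩ B → y ∈ C → ∀ v ∈ proxNormalCone C x,
      ⟪v, x - y⟫ ≥ -(‖v‖ / (2 * t) * ‖x - y‖ ^ 2) := by
    intro x y hx hy v hv
    by_cases hv0 : v = 0
    · subst hv0
      simp only [inner_zero_left, norm_zero]
      have : (0:ℝ) / (2 * t) * ‖x - y‖ ^ 2 = 0 := by ring
      rw [this, neg_zero]
    · exact proj_key hy ht0 hv0 (hreg t htmem x hx v hv hv0)
  have h1 := key x₁ x₂ hx₁ hx₂.1 v₁ hv₁
  have h2 := key x₂ x₁ hx₂ hx₁.1 v₂ hv₂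
  have hsym : ‖x₂ - x₁‖ = ‖x₁ - x₂‖ := norm_sub_rev _ _
  rw [hsym] at h2
  have h2' : ⟪v₂, x₁ - x₂⟫ ≤ ‖v₂‖ / (2 * t) * ‖x₁ - x₂‖ ^ 2 := by
    have : ⟪v₂, x₂ - x₁⟫ = -⟪v₂, x₁ - x₂⟫ := by
      rw [← inner_neg_right]; congr 1; abel
    rw [this] at h2; linarith
  rw [inner_sub_left]
  have h2t : (2 * t) = η := by rw [ht]; ring
  rw [h2t] at h1 h2'
  have h1' : ⟪v₁, x₁ - x₂⟫ ≥ -(1 / η * ‖v₁‖ * ‖x₁ - x₂‖ ^ 2) := by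
    have : ‖v₁‖ / η * ‖x₁ - x₂‖ ^ 2 = 1 / η * ‖v₁‖ * ‖x₁ - x₂‖ ^ 2 := by ring
    linarith [h1, this.le]
  have e : 1 / η * (‖v₁‖ + ‖v₂‖) * ‖x₁ - x₂‖ ^ 2
      = 1 / η * ‖v₁‖ * ‖x₁ - x₂‖ ^ 2 + ‖v₂‖ / η * ‖x₁ - x₂‖ ^ 2 := by ring
  linarith [h1', h2']
end
end
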